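/- For integers ℓ ≥ 0 and m with |m| ≤ ℓ, the spherical harmonic Y_ℓ^m(θ,φ) = e^{imφ} P_ℓ^m(cos θ) satisfies the eigenvalue equation Δ_{S²} Y_ℓ^m = -ℓ(ℓ+1) Y_ℓ^m, where Δ_{S²} is the Laplace–Beltrami operator on the unit sphere. -/

import Mathlib

open Real

/-- The Legendre polynomial `P_ℓ`, via the Rodrigues formula. -/
noncomputable def legendreP (ℓ : ℕ) (x : ℝ) : ℝ :=
  (1 / (2 ^ ℓ * (ℓ.factorial : ℝ))) * iteratedDeriv ℓ (fun t : ℝ => (t ^ 2 - 1) ^ ℓ) x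

/-- The associated Legendre function `P_ℓ^m(x) = (1-x²)^{m/2} (d/dx)^m P_ℓ(x)`. -/
noncomputable def assocLegendre (ℓ m : ℕ) (x : ℝ) : ℝ :=
  (Real.sqrt (1 - x ^ 2)) ^ m * iteratedDeriv m (legendreP ℓ) x

/-- The spherical harmonic `Y_ℓ^m(θ,φ) = e^{imφ} P_ℓ^{|m|}(cos θ)`. -/
noncomputable def sphHarm (ℓ : ℕ) (m : ℤ) (θ φ : ℝ) : ℂ :=
  Complex.exp (Complex.I * m * φ) * (assocLegendre ℓ m.natAbs (Real.cos θ) : ℝ)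


open Polynomial

lemma derivX2sq : derivative (X ^ 2 : ℝ[X]) = 2 * X := by
  simp [derivative_X_pow, map_ofNat]
  exact one_add_one_eq_two

lemma derivX2 : derivative (X ^ 2 - 1 : ℝ[X]) = 2 * X := by
  rw [derivative_sub, derivX2sq, derivative_one, sub_zero]

lemma auxA (ℓ : ℕ) :
    (1 - X ^ 2) * derivative ((X ^ 2 - 1 : ℝ[X]) ^ ℓ)
      + 2 * (ℓ : ℝ[X]) * X * (X ^ 2 - 1) ^ ℓ = 0 := by
  induction ℓ with
  | zero => simp
  | succ n ih =>
    rw [pow_succ (X ^ 2 - 1 : ℝ[X]) n, derivative_mul, derivX2]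
    push_cast
    linear_combination (X ^ 2 - 1 : ℝ[X]) * ih

lemma auxStar (ℓ n : ℕ) :
    (1 - X ^ 2) * derivative (derivative (derivative^[n] ((X ^ 2 - 1 : ℝ[X]) ^ ℓ)))
      + 2 * ((ℓ : ℝ[X]) - (n : ℝ[X]) - 1) * X * derivative (derivative^[n] ((X ^ 2 - 1) ^ ℓ))
      + ((n : ℝ[X]) + 1) * (2 * (ℓ : ℝ[X]) - (n : ℝ[X])) * derivative^[n] ((X ^ 2 - 1) ^ ℓ)
      = 0 := by
  induction n with
  | zero =>
    have h := congrArg derivative (auxA ℓ)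
    simp only [derivative_mul, map_add, map_sub, derivative_one, derivative_X,
      derivative_natCast, derivative_ofNat, derivX2sq, map_zero,
      Function.iterate_zero_apply, Nat.cast_zero, mul_one, mul_zero, zero_mul,
      add_zero, zero_add, sub_zero, zero_sub] at h ⊢
    linear_combination h
  | succ n ih =>
    have h := congrArg derivative ih
    simp only [derivative_mul, map_add, map_sub, derivative_one, derivative_X,
      derivative_natCast, derivative_ofNat, derivX2sq, map_zero, mul_one, mul_zero,
      zero_mul, add_zero, zero_add, sub_zero, zero_sub] at h
    rw [Function.iterate_succ_apply']
    push_cast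
    linear_combination h

lemma iteratedDeriv_polyEval (n : ℕ) (p : ℝ[X]) :
    iteratedDeriv n (fun x => p.eval x) = fun x => (derivative^[n] p).eval x := by
  induction n generalizing p with
  | zero => simp
  | succ n ih =>
    rw [iteratedDeriv_succ']
    have h : deriv (fun x => p.eval x) = fun x => (derivative p).eval x := by
      funext x; exact Polynomial.deriv _
    rw [h, ih, Function.iterate_succ_apply]

noncomputable def Qa (ℓ k : ℕ) (x : ℝ) : ℝ :=
  (1 / (2 ^ ℓ * (ℓ.factorial : ℝ))) *
    (derivative^[ℓ + k] ((X ^ 2 - 1 : ℝ[X]) ^ ℓ)).eval x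

lemma legendreP_eq (ℓ : ℕ) :
    legendreP ℓ = fun x =>
      (C (1 / (2 ^ ℓ * (ℓ.factorial : ℝ))) * derivative^[ℓ] ((X ^ 2 - 1 : ℝ[X]) ^ ℓ)).eval x := by
  funext x
  have h : (fun t : ℝ => (t ^ 2 - 1) ^ ℓ) = fun t => ((X ^ 2 - 1 : ℝ[X]) ^ ℓ).eval t := by
    funext t; simp
  rw [legendreP, h, iteratedDeriv_polyEval]
  simp [eval_mul]

lemma Qa_eq (ℓ k : ℕ) : iteratedDeriv k (legendreP ℓ) = Qa ℓ k := by
  rw [legendreP_eq, iteratedDeriv_polyEval]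
  funext x
  rw [Polynomial.iterate_derivative_C_mul]
  simp only [Qa, eval_mul, eval_C]
  rw [← Function.iterate_add_apply, add_comm k ℓ]

lemma hasDerivAt_Qa (ℓ k : ℕ) (x : ℝ) : HasDerivAt (Qa ℓ k) (Qa ℓ (k + 1) x) x := by
  have h := (Polynomial.hasDerivAt (derivative^[ℓ + k] ((X ^ 2 - 1 : ℝ[X]) ^ ℓ)) x).const_mul
    (1 / (2 ^ ℓ * (ℓ.factorial : ℝ)))
  have e : derivative^[ℓ + (k + 1)] ((X ^ 2 - 1 : ℝ[X]) ^ ℓ)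
      = derivative (derivative^[ℓ + k] ((X ^ 2 - 1 : ℝ[X]) ^ ℓ)) := by
    rw [← add_assoc, Function.iterate_succ_apply']
  have e2 : Qa ℓ (k + 1) x = 1 / (2 ^ ℓ * (ℓ.factorial : ℝ)) *
      (derivative (derivative^[ℓ + k] ((X ^ 2 - 1 : ℝ[X]) ^ ℓ))).eval x := by
    unfold Qa; rw [e]
  rw [e2]; exact h

lemma ode_Qa (ℓ k : ℕ) (x : ℝ) :
    (1 - x ^ 2) * Qa ℓ (k + 2) x - 2 * ((k : ℝ) + 1) * x * Qa ℓ (k + 1) x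
      + ((ℓ : ℝ) * ((ℓ : ℝ) + 1) - (k : ℝ) * ((k : ℝ) + 1)) * Qa ℓ k x = 0 := by
  have h := congrArg (eval x) (auxStar ℓ (ℓ + k))
  simp only [eval_add, eval_mul, eval_sub, eval_one, eval_pow, eval_X, eval_natCast,
    map_zero, eval_zero, eval_ofNat] at h
  unfold Qa
  rw [show ℓ + (k + 2) = ℓ + k + 1 + 1 by ring, show ℓ + (k + 1) = ℓ + k + 1 by ring]
  simp only [Function.iterate_succ_apply']
  push_cast at h ⊢
  linear_combination (1 / (2 ^ ℓ * (ℓ.factorial : ℝ))) * h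

noncomputable def gg (ℓ k : ℕ) (t : ℝ) : ℝ := Real.sin t ^ k * Qa ℓ k (Real.cos t)

noncomputable def gg1 (ℓ k : ℕ) (t : ℝ) : ℝ :=
  (k : ℝ) * Real.sin t ^ (k - 1) * Real.cos t * Qa ℓ k (Real.cos t)
    + Real.sin t ^ k * (Qa ℓ (k + 1) (Real.cos t) * -Real.sin t)

noncomputable def FF (ℓ k : ℕ) (t : ℝ) : ℝ :=
  (k : ℝ) * Real.cos t * Real.sin t ^ k * Qa ℓ k (Real.cos t)
    - Real.sin t ^ (k + 2) * Qa ℓ (k + 1) (Real.cos t)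

noncomputable def FF2 (ℓ k : ℕ) (t : ℝ) : ℝ :=
  ((k : ℝ) * -Real.sin t * Real.sin t ^ k
      + (k : ℝ) * Real.cos t * ((k : ℝ) * Real.sin t ^ (k - 1) * Real.cos t))
        * Qa ℓ k (Real.cos t)
    + (k : ℝ) * Real.cos t * Real.sin t ^ k * (Qa ℓ (k + 1) (Real.cos t) * -Real.sin t)
    - (((k : ℝ) + 2) * Real.sin t ^ (k + 1) * Real.cos t * Qa ℓ (k + 1) (Real.cos t)
        + Real.sin t ^ (k + 2) * (Qa ℓ (k + 2) (Real.cos t) * -Real.sin t))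

lemma hasDerivAt_gg (ℓ k : ℕ) (t : ℝ) : HasDerivAt (gg ℓ k) (gg1 ℓ k t) t := by
  have h := ((Real.hasDerivAt_sin t).pow k).mul
    ((hasDerivAt_Qa ℓ k (Real.cos t)).comp t (Real.hasDerivAt_cos t))
  exact h

lemma hasDerivAt_FF (ℓ k : ℕ) (t : ℝ) : HasDerivAt (FF ℓ k) (FF2 ℓ k t) t := by
  have hA := (((Real.hasDerivAt_cos t).const_mul (k : ℝ)).mul
      ((Real.hasDerivAt_sin t).pow k)).mul
    ((hasDerivAt_Qa ℓ k (Real.cos t)).comp t (Real.hasDerivAt_cos t))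
  have hB := ((Real.hasDerivAt_sin t).pow (k + 2)).mul
    ((hasDerivAt_Qa ℓ (k + 1) (Real.cos t)).comp t (Real.hasDerivAt_cos t))
  have h := hA.sub hB
  refine h.congr_deriv ?_
  unfold FF2
  simp only [Function.comp_apply, Pi.mul_apply, Pi.pow_apply]
  push_cast
  ring

lemma sin_mul_gg1 (ℓ k : ℕ) (t : ℝ) : Real.sin t * gg1 ℓ k t = FF ℓ k t := by
  rcases k with _ | n
  · simp [gg1, FF]; ring
  · simp only [gg1, FF, Nat.succ_sub_one]
    push_cast
    ring

lemma key_identity (ℓ k : ℕ) (t : ℝ) :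
    Real.sin t * FF2 ℓ k t - (k : ℝ) ^ 2 * gg ℓ k t
      + (ℓ : ℝ) * ((ℓ : ℝ) + 1) * Real.sin t ^ 2 * gg ℓ k t = 0 := by
  rcases k with _ | n
  · simp only [gg, FF2, Nat.cast_zero, Nat.zero_sub, pow_zero, zero_mul, mul_zero,
      zero_add, add_zero, mul_one, one_mul, ne_eq, zero_sub]
    linear_combination (Real.sin t ^ 2) * ode_Qa ℓ 0 (Real.cos t)
      + (Real.sin t ^ 2 * Qa ℓ 2 (Real.cos t)) * (Real.sin_sq_add_cos_sq t)
  · simp only [gg, FF2, Nat.succ_sub_one]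
    push_cast
    linear_combination (norm := (push_cast; ring)) (Real.sin t ^ (n + 3)) * ode_Qa ℓ (n + 1) (Real.cos t)
      + (Real.sin t ^ (n + 3) * Qa ℓ (n + 3) (Real.cos t)
          + ((n : ℝ) + 1) ^ 2 * Real.sin t ^ (n + 1) * Qa ℓ (n + 1) (Real.cos t))
        * (Real.sin_sq_add_cos_sq t)

lemma assocLegendre_eq (ℓ k : ℕ) {t : ℝ} (ht : t ∈ Set.Ioo (0:ℝ) π) :
    assocLegendre ℓ k (Real.cos t) = gg ℓ k t := by
  have h0 : Real.sqrt (1 - Real.cos t ^ 2) = Real.sin t := by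
    rw [← Real.sin_sq t]
    exact Real.sqrt_sq (Real.sin_nonneg_of_nonneg_of_le_pi ht.1.le ht.2.le)
  rw [assocLegendre, h0, Qa_eq, gg]

/-- For integers `ℓ ≥ 0` and `m` with `|m| ≤ ℓ`, the spherical harmonic
`Y_ℓ^m(θ,φ) = e^{imφ} P_ℓ^m(cos θ)` satisfies
`Δ_{S²} Y_ℓ^m = -ℓ(ℓ+1) Y_ℓ^m`, where
`Δ_{S²} f = (1/sin θ) ∂_θ(sin θ ∂_θ f) + (1/sin²θ) ∂²_φ f`. -/
theorem sphHarm_eigenfunction (ℓ : ℕ) (m : ℤ) (hm : m.natAbs ≤ ℓ) :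
    ∀ θ ∈ Set.Ioo (0:ℝ) π, ∀ φ : ℝ,
      (1 / (Real.sin θ : ℂ)) *
          deriv (fun θ' : ℝ => (Real.sin θ' : ℂ) *
            deriv (fun t : ℝ => sphHarm ℓ m t φ) θ') θ
        + (1 / (Real.sin θ : ℂ) ^ 2) *
            iteratedDeriv 2 (fun φ' : ℝ => sphHarm ℓ m θ φ') φ
      = -(ℓ * (ℓ + 1) : ℂ) * sphHarm ℓ m θ φ := by
  intro θ hθ φ
  have hs : 0 < Real.sin θ := Real.sin_pos_of_pos_of_lt_pi hθ.1 hθ.2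
  set k := m.natAbs with hk
  set E := Complex.exp (Complex.I * m * φ) with hE
  have hsph : ∀ t ∈ Set.Ioo (0:ℝ) π, sphHarm ℓ m t φ = E * ((gg ℓ k t : ℝ) : ℂ) := by
    intro t ht
    rw [sphHarm, assocLegendre_eq ℓ k ht]
  have hDsph : ∀ t ∈ Set.Ioo (0:ℝ) π,
      deriv (fun t' : ℝ => sphHarm ℓ m t' φ) t = E * ((gg1 ℓ k t : ℝ) : ℂ) := by
    intro t ht
    have hG : HasDerivAt (fun t' : ℝ => E * ((gg ℓ k t' : ℝ) : ℂ))
        (E * ((gg1 ℓ k t : ℝ) : ℂ)) t :=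
      ((hasDerivAt_gg ℓ k t).ofReal_comp).const_mul E
    have hev : (fun t' : ℝ => sphHarm ℓ m t' φ) =ᶠ[nhds t]
        fun t' => E * ((gg ℓ k t' : ℝ) : ℂ) := by
      filter_upwards [isOpen_Ioo.mem_nhds ht] with y hy
      exact hsph y hy
    exact (hG.congr_of_eventuallyEq hev).deriv
  have hOuter : deriv (fun θ' : ℝ => (Real.sin θ' : ℂ) *
      deriv (fun t : ℝ => sphHarm ℓ m t φ) θ') θ = E * ((FF2 ℓ k θ : ℝ) : ℂ) := by
    have hH : HasDerivAt (fun t' : ℝ => E * ((FF ℓ k t' : ℝ) : ℂ))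
        (E * ((FF2 ℓ k θ : ℝ) : ℂ)) θ :=
      ((hasDerivAt_FF ℓ k θ).ofReal_comp).const_mul E
    have hev : (fun θ' : ℝ => (Real.sin θ' : ℂ) * deriv (fun t : ℝ => sphHarm ℓ m t φ) θ')
        =ᶠ[nhds θ] fun t' => E * ((FF ℓ k t' : ℝ) : ℂ) := by
      filter_upwards [isOpen_Ioo.mem_nhds hθ] with y hy
      rw [hDsph y hy, ← sin_mul_gg1 ℓ k y]
      push_cast
      ring
    exact (hH.congr_of_eventuallyEq hev).deriv
  have hd1 : ∀ C : ℂ, ∀ x : ℝ, HasDerivAt (fun φ' : ℝ => Complex.exp (Complex.I * m * φ') * C)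
      (Complex.I * m * (Complex.exp (Complex.I * m * x) * C)) x := by
    intro C x
    have h0 : HasDerivAt (fun φ' : ℝ => Complex.I * m * (φ' : ℂ)) (Complex.I * m) x := by
      simpa using ((hasDerivAt_id x).ofReal_comp (z := x)).const_mul (Complex.I * (m : ℂ))
    have h1 := (h0.cexp).mul_const C
    refine h1.congr_deriv ?_
    ring
  have hφ2 : iteratedDeriv 2 (fun φ' : ℝ => sphHarm ℓ m θ φ') φ
      = (Complex.I * m) ^ 2 * sphHarm ℓ m θ φ := by
    have hfun : (fun φ' : ℝ => sphHarm ℓ m θ φ')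
        = fun φ' : ℝ => Complex.exp (Complex.I * m * φ') *
            ((assocLegendre ℓ k (Real.cos θ) : ℝ) : ℂ) := rfl
    rw [hfun, show (2:ℕ) = 1 + 1 from rfl, iteratedDeriv_succ, iteratedDeriv_one]
    have e1 : deriv (fun φ' : ℝ => Complex.exp (Complex.I * m * φ') *
          ((assocLegendre ℓ k (Real.cos θ) : ℝ) : ℂ))
        = fun x : ℝ => Complex.I * m * (Complex.exp (Complex.I * m * x) *
            ((assocLegendre ℓ k (Real.cos θ) : ℝ) : ℂ)) := by
      funext x; exact (hd1 _ x).deriv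
    rw [e1]
    have h2 := ((hd1 ((assocLegendre ℓ k (Real.cos θ) : ℝ) : ℂ) φ)).const_mul
      (Complex.I * (m : ℂ))
    rw [h2.deriv, sphHarm]
    ring
  have hm2 : (Complex.I * m) ^ 2 = -((k : ℂ)) ^ 2 := by
    have h1 : ((k : ℂ)) ^ 2 = ((m : ℂ)) ^ 2 := by
      have h2 := congrArg (fun z : ℤ => (z : ℂ)) (Int.natAbs_sq m)
      simp only [Int.cast_pow, Int.cast_natCast] at h2
      rw [hk]
      exact h2
    rw [mul_pow, Complex.I_sq, h1]
    ring
  have hkeyC : (Real.sin θ : ℂ) * ((FF2 ℓ k θ : ℝ) : ℂ) - (k : ℂ) ^ 2 * ((gg ℓ k θ : ℝ) : ℂ)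
      + (ℓ : ℂ) * ((ℓ : ℂ) + 1) * (Real.sin θ : ℂ) ^ 2 * ((gg ℓ k θ : ℝ) : ℂ) = 0 := by
    exact_mod_cast congrArg (fun r : ℝ => (r : ℂ)) (key_identity ℓ k θ)
  have hsne : (Real.sin θ : ℂ) ≠ 0 := Complex.ofReal_ne_zero.mpr hs.ne'
  rw [hOuter, hφ2, hsph θ hθ, hm2]
  set s : ℂ := (Real.sin θ : ℂ) with hsdef
  field_simp
  linear_combination E * hkeyC
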